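/- For any trivial word w = x₀⋯xₙ ∈ W(X) (i.e. a word whose reduced word is e), there is a match θ on {0,…,n} such that for every i ≤ n, x_{θ(i)} = x_i⁻¹. -/
import Mathlib


/-! Graev ultra-metrics on free groups (after Gao, Savchenko–Zarichnyi and
Shlossberg, "On Graev type ultra-metrics"). -/

namespace GraevStmt

variable {X : Type*}

/-- The alphabet `X̄ = X ∪ X⁻¹ ∪ {e}`: `none` is the letter `e`,
`some (x, true)` is the letter `x` and `some (x, false)` is the letter `x⁻¹`. -/
abbrev Letter (X : Type*) := Option (X × Bool)

/-- The letter `e`. -/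
def eL : Letter X := none

/-- The letter `x`, for `x ∈ X`. -/
def pos (x : X) : Letter X := some (x, true)

/-- The letter `x⁻¹`, for `x ∈ X`. -/
def neg (x : X) : Letter X := some (x, false)

/-- The formal inverse of a letter; `e⁻¹ = e` and `(x⁻¹)⁻¹ = x`. -/
def linv : Letter X → Letter X
  | none => none
  | some (x, b) => some (x, !b)

/-- Interpretation of a letter as an element of the free group `F(X)`. -/
def toF : Letter X → FreeGroup X
  | none => 1
  | some (x, b) => FreeGroup.mk [(x, b)]

/-- The reduced word of a word `w ∈ W(X)` over the alphabet `X̄`, viewed as the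
corresponding element of the free group `F(X)`. -/
def red (w : List (Letter X)) : FreeGroup X := (w.map toF).prod

/-- The canonical irreducible word over the alphabet `X̄` representing a given
element of the free group `F(X)`. -/
def wordOf [DecidableEq X] (w : FreeGroup X) : List (Letter X) :=
  w.toWord.map some

/-- `ρ_u(w, v)`: the maximum of the distances between corresponding letters of
two words of equal length. -/
def rho (d : Letter X → Letter X → ℝ) (w v : List (Letter X)) : ℝ :=
  (List.zipWith d w v).foldr max 0

/-- The Graev ultra-metric `δ_u` on `F(X)` associated with `d`:
`δ_u(w, v) = inf {ρ_u(w*, v*) : lh(w*) = lh(v*), (w*)' = w, (v*)' = v}`. -/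
noncomputable def graev (d : Letter X → Letter X → ℝ) (w v : FreeGroup X) : ℝ :=
  sInf {r : ℝ | ∃ w' v' : List (Letter X), w'.length = v'.length ∧
    red w' = w ∧ red v' = v ∧ r = rho d w' v'}

/-- `d` is an ultra-metric: symmetric, vanishing exactly on the diagonal and
satisfying the strong triangle inequality. -/
def IsUltraMetric {A : Type*} (d : A → A → ℝ) : Prop :=
  (∀ a b, d a b = d b a) ∧ (∀ a b, d a b = 0 ↔ a = b) ∧
    ∀ a b c, d a c ≤ max (d a b) (d b c)

/-- An admissible ultra-metric on the alphabet `X̄`, i.e. an ultra-metric with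
`d(x⁻¹, y⁻¹) = d(x, y)`, `d(x, e) = d(x⁻¹, e)` and `d(x⁻¹, y) = d(x, y⁻¹)`. -/
def IsAdmissible (d : Letter X → Letter X → ℝ) : Prop :=
  IsUltraMetric d ∧ (∀ x y : X, d (neg x) (neg y) = d (pos x) (pos y)) ∧
    (∀ x : X, d (pos x) eL = d (neg x) eL) ∧
    ∀ x y : X, d (neg x) (pos y) = d (pos x) (neg y)

/-- A function `R` on `F(X) × F(X)` is (two-sided) invariant if
`R(uwv, uw'v) = R(w, w')` for all `u, v, w, w'`. -/
def IsInvariant (R : FreeGroup X → FreeGroup X → ℝ) : Prop :=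
  ∀ u v w w' : FreeGroup X, R (u * w * v) (u * w' * v) = R w w'

/-- A match on `{0, …, n-1}`: an involution `θ` such that there are no
`i < j < θ(i) < θ(j)`. -/
def IsMatch {n : ℕ} (θ : Fin n → Fin n) : Prop :=
  (∀ i, θ (θ i) = i) ∧ ∀ i j : Fin n, ¬(i < j ∧ j < θ i ∧ θ i < θ j)

/-- The word `w^θ` associated with a word `w` and a match `θ`:
its `i`-th letter is `x_i` if `θ(i) > i`, `e` if `θ(i) = i`, and
`x_{θ(i)}⁻¹` if `θ(i) < i`. -/
def matchWord (w : List (Letter X)) (θ : Fin w.length → Fin w.length) :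
    List (Letter X) :=
  List.ofFn fun i => if i < θ i then w.get i
    else if θ i = i then eL else linv (w.get (θ i))

/-- `j₂(x, y) = x⁻¹y`. -/
def j2 (p : X × X) : FreeGroup X := (FreeGroup.of p.1)⁻¹ * FreeGroup.of p.2

/-- `j₂*(x, y) = xy⁻¹`. -/
def j2s (p : X × X) : FreeGroup X := FreeGroup.of p.1 * (FreeGroup.of p.2)⁻¹

/-- `ε̃ = ⋃_{w ∈ F(X)} w (j₂(ε) ∪ j₂*(ε)) w⁻¹` for `ε ⊆ X × X`. -/
def tilde (S : Set (X × X)) : Set (FreeGroup X) :=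
  ⋃ w : FreeGroup X, (fun g => w * g * w⁻¹) '' (j2 '' S ∪ j2s '' S)

/-- The extension of an ultra-metric `d` on `X` to the alphabet `X̄` determined
by a base point `x₀`: `d(x, e) = max {d(x, x₀), 1}`, `d(x⁻¹, y⁻¹) = d(x, y)`
and `d(x⁻¹, y) = d(x, y⁻¹) = max {d(x, e), d(y, e)}` for `x, y ∈ X ∪ {e}`. -/
def ext (d : X → X → ℝ) (x₀ : X) : Letter X → Letter X → ℝ
  | none, none => 0
  | some (x, _), none => max (d x x₀) 1
  | none, some (y, _) => max (d y x₀) 1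
  | some (x, true), some (y, true) => d x y
  | some (x, false), some (y, false) => d x y
  | some (x, _), some (y, _) => max (max (d x x₀) 1) (max (d y x₀) 1)

/-- The extension of an ultra-metric `d` of diameter at most `1` on `X` to the
alphabet `X̄`, with `d(x⁻¹, y⁻¹) = d(x, y)` and
`d(x⁻¹, y) = d(x, y⁻¹) = d(x, e) = d(x⁻¹, e) = 1`. -/
def extOne (d : X → X → ℝ) : Letter X → Letter X → ℝ
  | none, none => 0
  | some (x, true), some (y, true) => d x y
  | some (x, false), some (y, false) => d x y
  | _, _ => 1

/-- The homomorphism `α : F(X) → ℤ` extending the constant map `X → {1} ⊆ ℤ`. -/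
def alpha (w : FreeGroup X) : ℤ :=
  Multiplicative.toAdd ((FreeGroup.lift fun _ : X => Multiplicative.ofAdd (1 : ℤ)) w)

/-- `F(q_r) : F(X) → F(X/F_r)`, where `X/F_r` is the quotient of `X` by the
partition into open balls of radius `r` (for an ultra-metric the relation
`d x y < r` is an equivalence relation, so `Quot` of this relation is exactly
this quotient) and `q_r` is the quotient map. -/
def Fq (d : X → X → ℝ) (r : ℝ) :
    FreeGroup X →* FreeGroup (Quot fun x y : X => d x y < r) :=
  FreeGroup.map (Quot.mk _)

/-- The Savchenko–Zarichnyi function `d̂` on `F(X) × F(X)`: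
`d̂(v, w) = 1` if `α(v) ≠ α(w)`, and
`d̂(v, w) = inf {r > 0 : F(q_r)(v) = F(q_r)(w)}` if `α(v) = α(w)`. -/
noncomputable def dHat (d : X → X → ℝ) (v w : FreeGroup X) : ℝ :=
  if alpha v = alpha w then sInf {r : ℝ | 0 < r ∧ Fq d r v = Fq d r w} else 1

section Lemma35
variable {X : Type*}


lemma linv_linv (c : Letter X) : linv (linv c) = c := by
  rcases c with _ | ⟨x, b⟩ <;> simp [linv]

lemma toF_linv (c : Letter X) : toF c * toF (linv c) = 1 := by
  rcases c with _ | ⟨x, b⟩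
  · simp [linv, toF]
  · simp [linv, toF, FreeGroup.mul_mk]
    rw [FreeGroup.one_eq_mk]
    exact Quot.sound (by simpa using @FreeGroup.Red.Step.not X [] [] x b)

lemma red_cons (c : Letter X) (w : List (Letter X)) : red (c :: w) = toF c * red w := by
  simp [red]

lemma red_append (w v : List (Letter X)) : red (w ++ v) = red w * red v := by
  simp [red]

lemma red_map_some (L : List (X × Bool)) : red (L.map some) = FreeGroup.mk L := by
  induction L with
  | nil => simp [red, ← FreeGroup.one_eq_mk]
  | cons a t ih =>
    obtain ⟨x, b⟩ := a
    rw [List.map_cons, red_cons, ih, show toF (some (x,b)) = FreeGroup.mk [(x,b)] from rfl,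
      FreeGroup.mul_mk]
    rfl

lemma eq_map_some (w : List (Letter X)) (h : ∀ c ∈ w, c ≠ none) :
    w = (w.filterMap id).map some := by
  induction w with
  | nil => rfl
  | cons c t ih =>
    rcases c with _ | a
    · exact absurd rfl (h none (by simp))
    · simp only [List.filterMap_cons, id]
      rw [List.map_cons]
      congr 1
      exact ih fun c hc => h c (by simp [hc])

lemma find_cancel (w : List (Letter X)) (hne : w ≠ []) (hw : red w = 1) :
    (∃ w₁ w₂, w = w₁ ++ eL :: w₂) ∨ ∃ w₁ c w₂, w = w₁ ++ c :: linv c :: w₂ := by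
  by_cases hn : ∃ c ∈ w, c = none
  · obtain ⟨c, hc, rfl⟩ := hn
    obtain ⟨s, t, rfl⟩ := List.append_of_mem hc
    exact Or.inl ⟨s, t, rfl⟩
  push_neg at hn
  right
  set L := w.filterMap id with hL
  have hwL : w = L.map some := eq_map_some w hn
  have hmk : FreeGroup.mk L = FreeGroup.mk [] := by
    rw [← FreeGroup.one_eq_mk, ← red_map_some, ← hwL, hw]
  obtain ⟨L', hr1, hr2⟩ := FreeGroup.Red.exact.mp hmk
  have hL' : L' = [] := FreeGroup.Red.nil_iff.mp hr2
  subst hL'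
  have hLne : L ≠ [] := by
    intro h; apply hne; rw [hwL, h]; rfl
  rcases Relation.ReflTransGen.cases_head hr1 with h | ⟨c, hstep, _⟩
  · exact absurd h hLne
  · have key : ∀ M c' : List (X × Bool), FreeGroup.Red.Step M c' →
        ∃ L₁ x b L₂, M = L₁ ++ (x, b) :: (x, !b) :: L₂ := by
      intro M c' h
      cases h with | @not L₁ L₂ x b => exact ⟨L₁, x, b, L₂, rfl⟩
    obtain ⟨L₁, x, b, L₂, hdec⟩ := key _ _ hstep
    refine ⟨L₁.map some, some (x, b), L₂.map some, ?_⟩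
    rw [hwL, hdec]
    simp [linv]



/-- shift indices `≥ p` up by `k` -/
def sk (p k j : ℕ) : ℕ := if j < p then j else j + k

/-- lift a match on `n` points to `n+k` points, inserting a reversed block
of size `k` at position `p`. -/
def liftM (p k : ℕ) (θ : ℕ → ℕ) (i : ℕ) : ℕ :=
  if i < p then sk p k (θ i)
  else if i < p + k then p + k - 1 - (i - p)
  else sk p k (θ (i - k))

lemma skA {p k j : ℕ} (h : j < p) : sk p k j = j := by simp [sk, h]
lemma skB {p k j : ℕ} (h : p ≤ j) : sk p k j = j + k := by simp [sk, Nat.not_lt.2 h]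

lemma liftA {p k : ℕ} {θ : ℕ → ℕ} {i : ℕ} (h : i < p) : liftM p k θ i = sk p k (θ i) := by
  simp [liftM, h]
lemma liftB {p k : ℕ} {θ : ℕ → ℕ} {i : ℕ} (h : p ≤ i) (h' : i < p + k) :
    liftM p k θ i = p + k - 1 - (i - p) := by
  simp [liftM, Nat.not_lt.2 h, h']
lemma liftC {p k : ℕ} {θ : ℕ → ℕ} {i : ℕ} (h : p + k ≤ i) :
    liftM p k θ i = sk p k (θ (i - k)) := by
  simp [liftM, Nat.not_lt.2 h, Nat.not_lt.2 (le_trans (Nat.le_add_right p k) h),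
    Nat.not_lt.2 (show p ≤ i from le_trans (Nat.le_add_right p k) h)]

lemma lift (n p k : ℕ) (hp : p ≤ n) (hk : 1 ≤ k) (θ : ℕ → ℕ)
    (h1 : ∀ i, i < n → θ i < n) (h2 : ∀ i, i < n → θ (θ i) = i)
    (h3 : ∀ i j, i < n → j < n → ¬(i < j ∧ j < θ i ∧ θ i < θ j)) :
    (∀ i, i < n + k → liftM p k θ i < n + k) ∧
    (∀ i, i < n + k → liftM p k θ (liftM p k θ i) = i) ∧
    (∀ i j, i < n + k → j < n + k →
      ¬(i < j ∧ j < liftM p k θ i ∧ liftM p k θ i < liftM p k θ j)) := by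
  have skLT : ∀ j, j < n → sk p k j < n + k := by intro j hj; unfold sk; split <;> omega
  refine ⟨?_, ?_, ?_⟩
  · intro i hi
    rcases lt_or_ge i p with h | h
    · rw [liftA h]; exact skLT _ (h1 i (by omega))
    rcases lt_or_ge i (p + k) with h' | h'
    · rw [liftB h h']; omega
    · rw [liftC h']; exact skLT _ (h1 _ (by omega))
  · intro i hi
    rcases lt_or_ge i p with h | h
    · rw [liftA h]
      have hθ := h1 i (by omega)
      rcases lt_or_ge (θ i) p with h2' | h2'
      · rw [skA h2', liftA h2', h2 i (by omega), skA h]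
      · rw [skB h2', liftC (by omega)]
        rw [show θ i + k - k = θ i by omega, h2 i (by omega), skA h]
    rcases lt_or_ge i (p + k) with h' | h'
    · rw [liftB h h', liftB (by omega) (by omega)]
      omega
    · rw [liftC h']
      have hθ := h1 (i - k) (by omega)
      rcases lt_or_ge (θ (i - k)) p with h2' | h2'
      · rw [skA h2', liftA h2', h2 _ (by omega), skB (by omega)]
        omega
      · rw [skB h2', liftC (by omega)]
        rw [show θ (i - k) + k - k = θ (i - k) by omega, h2 _ (by omega), skB (by omega)]
        omega
  · rintro i j hi hj ⟨hij, hx, hy⟩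
    -- cases on position of i
    rcases lt_or_ge i p with hip | hip
    · rw [liftA hip] at hx hy
      have hθi := h1 i (by omega)
      rcases lt_or_ge j p with hjp | hjp
      · rw [liftA hjp] at hy
        have hθj := h1 j (by omega)
        refine h3 i j (by omega) (by omega) ⟨hij, ?_, ?_⟩
        · rcases lt_or_ge (θ i) p with h' | h'
          · rwa [skA h'] at hx
          · omega
        · rcases lt_or_ge (θ i) p with h' | h' <;> rcases lt_or_ge (θ j) p with h'' | h''
          · rwa [skA h', skA h''] at hy
          · omega
          · rw [skB h', skA h''] at hy; omega
          · rw [skB h', skB h''] at hy; omega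
      rcases lt_or_ge j (p + k) with hjp' | hjp'
      · -- j in block, θ j in block, but j < liftM i forces liftM i in block: contra
        rw [liftB hjp hjp'] at hy
        rcases lt_or_ge (θ i) p with h' | h'
        · rw [skA h'] at hx hy; omega
        · rw [skB h'] at hx hy; omega
      · -- j ≥ p + k
        rw [liftC hjp'] at hy
        have hθj := h1 (j - k) (by omega)
        have h' : p ≤ θ i := by
          by_contra h''
          rw [skA (by omega)] at hx; omega
        rw [skB h'] at hx hy
        have h'' : p ≤ θ (j - k) := by
          by_contra h''
          rw [skA (by omega)] at hy; omega
        rw [skB h''] at hy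
        exact h3 i (j - k) (by omega) (by omega) ⟨by omega, by omega, by omega⟩
    rcases lt_or_ge i (p + k) with hip' | hip'
    · -- i in block: θ i in block, so j in block, then θ j in block; reversal kills it
      rw [liftB hip hip'] at hx hy
      rcases lt_or_ge j p with hjp | hjp
      · omega
      rcases lt_or_ge j (p + k) with hjp' | hjp'
      · rw [liftB hjp hjp'] at hy; omega
      · omega
    · -- i ≥ p + k, so j ≥ p + k
      rw [liftC hip'] at hx hy
      have hθi := h1 (i - k) (by omega)
      have hjp' : p + k ≤ j := by omega
      rw [liftC hjp'] at hy
      have hθj := h1 (j - k) (by omega)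
      have h' : p ≤ θ (i - k) := by
        by_contra h''
        rw [skA (by omega)] at hx; omega
      rw [skB h'] at hx hy
      have h'' : p ≤ θ (j - k) := by
        by_contra h''
        rw [skA (by omega)] at hy; omega
      rw [skB h''] at hy
      exact h3 (i - k) (j - k) (by omega) (by omega) ⟨by omega, by omega, by omega⟩

lemma key (N : ℕ) : ∀ w : List (Letter X), w.length ≤ N → red w = 1 →
    ∃ θ : ℕ → ℕ, (∀ i, i < w.length → θ i < w.length) ∧
      (∀ i, i < w.length → θ (θ i) = i) ∧
      (∀ i j, i < w.length → j < w.length → ¬(i < j ∧ j < θ i ∧ θ i < θ j)) ∧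
      (∀ i, i < w.length → w[θ i]? = (w[i]?).map linv) := by
  induction N with
  | zero =>
    intro w hlen _
    exact ⟨id, fun i h => absurd h (by omega), fun i h => absurd h (by omega),
      fun i j h _ => absurd h (by omega), fun i h => absurd h (by omega)⟩
  | succ N ih =>
    intro w hlen hw
    rcases eq_or_ne w [] with rfl | hne
    · exact ⟨id, fun i h => absurd h (by simp at h), fun i h => absurd h (by simp at h),
        fun i j h _ => absurd h (by simp at h), fun i h => absurd h (by simp at h)⟩
    rcases find_cancel w hne hw with ⟨w₁, w₂, rfl⟩ | ⟨w₁, c, w₂, rfl⟩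
    · -- e-letter at position p := w₁.length; k = 1
      have hred' : red (w₁ ++ w₂) = 1 := by
        rw [red_append, red_cons, show toF (eL : Letter X) = 1 from rfl, one_mul] at hw
        rw [red_append]; exact hw
      have hlen1 : (w₁ ++ eL :: w₂).length = (w₁ ++ w₂).length + 1 := by
        simp; omega
      obtain ⟨θ', H1, H2, H3, H4⟩ := ih (w₁ ++ w₂) (by omega) hred'
      have hpn : w₁.length ≤ (w₁ ++ w₂).length := by simp
      obtain ⟨G1, G2, G3⟩ := lift (w₁ ++ w₂).length w₁.length 1 hpn le_rfl θ' H1 H2 H3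
      refine ⟨liftM w₁.length 1 θ', by rw [hlen1]; exact G1, by rw [hlen1]; exact G2,
        by rw [hlen1]; exact G3, ?_⟩
      intro i hi
      rw [hlen1] at hi
      have F1 : ∀ j, j < w₁.length → (w₁ ++ eL :: w₂)[j]? = (w₁ ++ w₂)[j]? := by
        intro j hj
        rw [List.getElem?_append_left hj, List.getElem?_append_left hj]
      have F2 : ∀ j, w₁.length ≤ j → (w₁ ++ eL :: w₂)[j + 1]? = (w₁ ++ w₂)[j]? := by
        intro j hj
        rw [List.getElem?_append_right (by omega : w₁.length ≤ j + 1),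
          List.getElem?_append_right hj,
          show j + 1 - w₁.length = (j - w₁.length) + 1 by omega, List.getElem?_cons_succ]
      have FS : ∀ j, j < (w₁ ++ w₂).length →
          (w₁ ++ eL :: w₂)[sk w₁.length 1 j]? = (w₁ ++ w₂)[j]? := by
        intro j hj
        rcases lt_or_ge j w₁.length with h | h
        · rw [skA h]; exact F1 j h
        · rw [skB h]; exact F2 j h
      rcases lt_or_ge i w₁.length with h | h
      · rw [liftA h, FS _ (H1 i (by omega)), F1 i h]
        exact H4 i (by omega)
      rcases lt_or_ge i (w₁.length + 1) with h' | h'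
      · have hip : i = w₁.length := by omega
        subst hip
        have hv : (w₁ ++ eL :: w₂)[w₁.length]? = some eL := by
          rw [List.getElem?_append_right le_rfl]; simp
        rw [show liftM w₁.length 1 θ' w₁.length = w₁.length by rw [liftB le_rfl (by omega)]; omega,
          hv]
        rfl
      · rw [liftC h', FS _ (H1 (i - 1) (by omega))]
        have e2 := F2 (i - 1) (by omega)
        rw [show i - 1 + 1 = i by omega] at e2
        rw [e2]
        exact H4 (i - 1) (by omega)
    · -- cancelling pair at positions p, p+1; k = 2
      have hred' : red (w₁ ++ w₂) = 1 := by
        rw [red_append, red_cons, red_cons, ← mul_assoc (toF c), toF_linv, one_mul] at hw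
        rw [red_append]; exact hw
      have hlen1 : (w₁ ++ c :: linv c :: w₂).length = (w₁ ++ w₂).length + 2 := by
        simp; omega
      obtain ⟨θ', H1, H2, H3, H4⟩ := ih (w₁ ++ w₂) (by omega) hred'
      have hpn : w₁.length ≤ (w₁ ++ w₂).length := by simp
      obtain ⟨G1, G2, G3⟩ := lift (w₁ ++ w₂).length w₁.length 2 hpn (by omega) θ' H1 H2 H3
      refine ⟨liftM w₁.length 2 θ', by rw [hlen1]; exact G1, by rw [hlen1]; exact G2,
        by rw [hlen1]; exact G3, ?_⟩
      intro i hi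
      rw [hlen1] at hi
      have F1 : ∀ j, j < w₁.length → (w₁ ++ c :: linv c :: w₂)[j]? = (w₁ ++ w₂)[j]? := by
        intro j hj
        rw [List.getElem?_append_left hj, List.getElem?_append_left hj]
      have F2 : ∀ j, w₁.length ≤ j → (w₁ ++ c :: linv c :: w₂)[j + 2]? = (w₁ ++ w₂)[j]? := by
        intro j hj
        rw [List.getElem?_append_right (by omega : w₁.length ≤ j + 2),
          List.getElem?_append_right hj,
          show j + 2 - w₁.length = (j - w₁.length) + 1 + 1 by omega,
          List.getElem?_cons_succ, List.getElem?_cons_succ]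
      have FS : ∀ j, j < (w₁ ++ w₂).length →
          (w₁ ++ c :: linv c :: w₂)[sk w₁.length 2 j]? = (w₁ ++ w₂)[j]? := by
        intro j hj
        rcases lt_or_ge j w₁.length with h | h
        · rw [skA h]; exact F1 j h
        · rw [skB h]; exact F2 j h
      have hv0 : (w₁ ++ c :: linv c :: w₂)[w₁.length]? = some c := by
        rw [List.getElem?_append_right le_rfl]; simp
      have hv1 : (w₁ ++ c :: linv c :: w₂)[w₁.length + 1]? = some (linv c) := by
        rw [List.getElem?_append_right (by omega),
          show w₁.length + 1 - w₁.length = 0 + 1 by omega, List.getElem?_cons_succ]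
        simp
      rcases lt_or_ge i w₁.length with h | h
      · rw [liftA h, FS _ (H1 i (by omega)), F1 i h]
        exact H4 i (by omega)
      rcases lt_or_ge i (w₁.length + 2) with h' | h'
      · rcases (by omega : i = w₁.length ∨ i = w₁.length + 1) with hip | hip <;> subst hip
        · rw [show liftM w₁.length 2 θ' w₁.length = w₁.length + 1 by
            rw [liftB le_rfl (by omega)]; omega, hv1, hv0]
          rfl
        · rw [show liftM w₁.length 2 θ' (w₁.length + 1) = w₁.length by
            rw [liftB (by omega) (by omega)]; omega, hv0, hv1]
          simp [linv_linv]
      · rw [liftC h', FS _ (H1 (i - 2) (by omega))]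
        have e2 := F2 (i - 2) (by omega)
        rw [show i - 2 + 2 = i by omega] at e2
        rw [e2]
        exact H4 (i - 2) (by omega)


end Lemma35

/-- Lemma 3.5 of Ding–Gao: for any trivial word `w = x₀⋯xₙ` there is a match
`θ` such that `x_{θ(i)} = x_i⁻¹` for all `i ≤ n`. -/
theorem exists_match_of_trivial {X : Type*} [Nonempty X]
    (w : List (Letter X)) (hw : red w = 1) :
    ∃ θ : Fin w.length → Fin w.length, IsMatch θ ∧
      ∀ i : Fin w.length, w.get (θ i) = linv (w.get i) := by
  obtain ⟨θ, h1, h2, h3, h4⟩ := key w.length w le_rfl hw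
  refine ⟨fun i => ⟨θ i, h1 i i.isLt⟩, ⟨?_, ?_⟩, ?_⟩
  · intro i
    apply Fin.ext
    exact h2 i i.isLt
  · intro i j hc
    exact h3 i j i.isLt j.isLt ⟨hc.1, hc.2.1, hc.2.2⟩
  · intro i
    have := h4 i i.isLt
    rw [List.getElem?_eq_getElem i.isLt, List.getElem?_eq_getElem (h1 i i.isLt)] at this
    simp only [Option.map_some] at this
    simpa [List.get_eq_getElem] using Option.some.inj this

end GraevStmt
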